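/- The language of acyclic formulae of set theory is not context-free. -/

import Mathlib

/-- Alphabet of the usual syntax of set theory. -/
inductive Alph : Type
  | lb | rb | imp | all | deq | mem | w | prime | bot
deriving DecidableEq

/-- Well-formed formulae of set theory; variables are naturals (number of primes). -/
inductive Fm : Type
  | bot : Fm
  | eq : ℕ → ℕ → Fm
  | mem : ℕ → ℕ → Fm
  | imp : Fm → Fm → Fm
  | all : ℕ → Fm → Fm
deriving DecidableEq

/-- The string `w'^n` for the variable with `n` primes. -/
def varStr (n : ℕ) : List Alph := Alph.w :: List.replicate n Alph.prime

/-- The string of symbols of a formula. -/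
def Fm.str : Fm → List Alph
  | .bot => [Alph.bot]
  | .eq x y => varStr x ++ [Alph.deq] ++ varStr y
  | .mem x y => varStr x ++ [Alph.mem] ++ varStr y
  | .imp φ ψ => [Alph.lb] ++ φ.str ++ [Alph.imp] ++ ψ.str ++ [Alph.rb]
  | .all x φ => [Alph.lb, Alph.all] ++ varStr x ++ [Alph.rb] ++ φ.str

/-- Pairs `(x, y)` such that `x ∈ y` occurs as an atomic subformula. -/
def Fm.memPairs : Fm → Finset (ℕ × ℕ)
  | .bot => ∅
  | .eq _ _ => ∅
  | .mem x y => {(x, y)}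
  | .imp φ ψ => φ.memPairs ∪ ψ.memPairs
  | .all _ φ => φ.memPairs

/-- Pairs `(x, y)` such that `x ≐ y` occurs as an atomic subformula. -/
def Fm.eqPairs : Fm → Finset (ℕ × ℕ)
  | .bot => ∅
  | .eq x y => {(x, y)}
  | .mem _ _ => ∅
  | .imp φ ψ => φ.eqPairs ∪ ψ.eqPairs
  | .all _ φ => φ.eqPairs

/-- A formula is stratified if some integer assignment to variables satisfies
`σ x = σ y - 1` for subformulae `x ∈ y` and `σ x = σ y` for subformulae `x ≐ y`. -/
def Fm.Stratified (φ : Fm) : Prop :=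
  ∃ σ : ℕ → ℤ, (∀ p ∈ φ.memPairs, σ p.1 = σ p.2 - 1) ∧ (∀ p ∈ φ.eqPairs, σ p.1 = σ p.2)

/-- Tagged atomic subformulae: `(false, x, y)` for `x ≐ y` and `(true, x, y)` for `x ∈ y`. -/
def Fm.atoms : Fm → Finset (Bool × ℕ × ℕ)
  | .bot => ∅
  | .eq x y => {(false, x, y)}
  | .mem x y => {(true, x, y)}
  | .imp φ ψ => φ.atoms ∪ ψ.atoms
  | .all _ φ => φ.atoms

/-- The number of quantifiers `[∀x]` over the variable `x` occurring in a formula. -/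
def Fm.quantCount (x : ℕ) : Fm → ℕ
  | .bot => 0
  | .eq _ _ => 0
  | .mem _ _ => 0
  | .imp φ ψ => Fm.quantCount x φ + Fm.quantCount x ψ
  | .all y φ => (if y = x then 1 else 0) + Fm.quantCount x φ

/-- The variable `x` has a free occurrence in the formula. -/
def Fm.FreeIn (x : ℕ) : Fm → Prop
  | .bot => False
  | .eq a b => a = x ∨ b = x
  | .mem a b => a = x ∨ b = x
  | .imp φ ψ => Fm.FreeIn x φ ∨ Fm.FreeIn x ψ
  | .all y φ => y ≠ x ∧ Fm.FreeIn x φ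

/-- Variables appearing in a formula (including binders). -/
def Fm.vars : Fm → Finset ℕ
  | .bot => ∅
  | .eq x y => {x, y}
  | .mem x y => {x, y}
  | .imp φ ψ => φ.vars ∪ ψ.vars
  | .all x φ => insert x φ.vars

/-- A formula is acyclic if every variable is either always free or always bound by the
same (unique) quantifier, and there is no cycle of distinct atomic subformulae linking a
sequence of variables `x_0, …, x_n` with `x_0 = x_n`, `n ≥ 1`. -/
def Fm.Acyclic (φ : Fm) : Prop :=
  (∀ x ∈ φ.vars, Fm.quantCount x φ = 0 ∨ (Fm.quantCount x φ = 1 ∧ ¬ Fm.FreeIn x φ)) ∧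
  ¬ ∃ (n : ℕ) (x : Fin (n + 1) → ℕ) (α : Fin n → Bool × ℕ × ℕ),
      1 ≤ n ∧ x 0 = x (Fin.last n) ∧ Function.Injective α ∧
      ∀ i : Fin n, α i ∈ φ.atoms ∧
        ((α i).2 = (x i.castSucc, x i.succ) ∨ (α i).2 = (x i.succ, x i.castSucc))

/-!
Any string of the language that uses only the letters of `[∀w][∀w']…[∀w'^(p-1)]⊥` is the string
of a formula `[∀x₁]…[∀x_L]⊥`, and acyclicity forces the `xᵢ` to be distinct, so such a string
has at least `L(L-1)/2` primes; the string above attains this bound. Pumping it either keeps `L`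
and changes only the number of primes, so that pumping down violates the bound, or makes `L` grow
linearly while the number of primes grows only linearly, so that pumping up violates it.

The pumping lemma is used in its weak form, without the bound on `|vmx|`: a long word has a
derivation with a chain of nested sub-derivations longer than the number of nonterminals, a
repeated nonterminal on it gives the loop, and minimality of the derivation makes it non-trivial.
-/

namespace ContextFreeRule

variable {T N : Type*} {r : ContextFreeRule T N}

lemma Rewrites.append_split {u₁ u₂ v : List (Symbol T N)} (h : r.Rewrites (u₁ ++ u₂) v) :
    (∃ v₁, r.Rewrites u₁ v₁ ∧ v = v₁ ++ u₂) ∨ ∃ v₂, r.Rewrites u₂ v₂ ∧ v = u₁ ++ v₂ := by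
  induction u₁ generalizing v with
  | nil => exact .inr ⟨v, h, rfl⟩
  | cons a u₁ ih =>
    rcases h with _ | ⟨_, h⟩
    · exact .inl ⟨_, .head u₁, by simp⟩
    · rcases ih h with ⟨v₁, h₁, rfl⟩ | ⟨v₂, h₂, rfl⟩
      · exact .inl ⟨a :: v₁, h₁.cons a, rfl⟩
      · exact .inr ⟨v₂, h₂, rfl⟩

lemma Rewrites.eq_output_of_singleton {A : N} {v : List (Symbol T N)}
    (h : r.Rewrites [.nonterminal A] v) : r.input = A ∧ v = r.output := by
  rcases h with _ | ⟨_, h⟩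
  · simp
  · nomatch h

end ContextFreeRule

namespace ContextFreeGrammar

variable {T : Type*} {g : ContextFreeGrammar T}

inductive DerivesIn (g : ContextFreeGrammar T) :
    List (Symbol T g.NT) → List (Symbol T g.NT) → ℕ → Prop
  | refl (u : List (Symbol T g.NT)) : g.DerivesIn u u 0
  | head {u v w : List (Symbol T g.NT)} {n : ℕ} :
      g.Produces u v → g.DerivesIn v w n → g.DerivesIn u w (n + 1)

namespace DerivesIn

variable {u v w : List (Symbol T g.NT)} {m n : ℕ}

lemma derives (h : g.DerivesIn u v n) : g.Derives u v := by
  induction h with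
  | refl => rfl
  | head p _ ih => exact p.trans_derives ih

lemma trans (h₁ : g.DerivesIn u v m) (h₂ : g.DerivesIn v w n) : g.DerivesIn u w (m + n) := by
  induction h₁ with
  | refl => simpa using h₂
  | head p _ ih => exact Nat.succ_add _ _ ▸ .head p (ih h₂)

lemma append_left (h : g.DerivesIn u v n) (p : List (Symbol T g.NT)) :
    g.DerivesIn (p ++ u) (p ++ v) n := by
  induction h with
  | refl => exact .refl _
  | head q _ ih => exact .head (q.append_left p) ih

lemma append_right (h : g.DerivesIn u v n) (p : List (Symbol T g.NT)) :
    g.DerivesIn (u ++ p) (v ++ p) n := by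
  induction h with
  | refl => exact .refl _
  | head q _ ih => exact .head (q.append_right p) ih

lemma append {u' v' : List (Symbol T g.NT)} (h : g.DerivesIn u v m) (h' : g.DerivesIn u' v' n) :
    g.DerivesIn (u ++ u') (v ++ v') (m + n) :=
  (h.append_right u').trans (h'.append_left v)

lemma append_split {u₁ u₂ : List (Symbol T g.NT)} (h : g.DerivesIn (u₁ ++ u₂) w n) :
    ∃ w₁ w₂ n₁ n₂, w = w₁ ++ w₂ ∧ n = n₁ + n₂ ∧
      g.DerivesIn u₁ w₁ n₁ ∧ g.DerivesIn u₂ w₂ n₂ := by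
  induction n generalizing u₁ u₂ with
  | zero => cases h; exact ⟨u₁, u₂, 0, 0, rfl, rfl, .refl _, .refl _⟩
  | succ n ih =>
    obtain _ | ⟨⟨r, hr, hrw⟩, h⟩ := h
    rcases hrw.append_split with ⟨v₁, hv₁, rfl⟩ | ⟨v₂, hv₂, rfl⟩
    · obtain ⟨w₁, w₂, n₁, n₂, rfl, rfl, h₁, h₂⟩ := ih h
      exact ⟨w₁, w₂, n₁ + 1, n₂, rfl, by omega, .head ⟨r, hr, hv₁⟩ h₁, h₂⟩
    · obtain ⟨w₁, w₂, n₁, n₂, rfl, rfl, h₁, h₂⟩ := ih h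
      exact ⟨w₁, w₂, n₁, n₂ + 1, rfl, by omega, h₁, .head ⟨r, hr, hv₂⟩ h₂⟩

lemma eq_of_zero (h : g.DerivesIn u v 0) : u = v := by
  cases h; rfl

lemma of_map_terminal {t : List T} (h : g.DerivesIn (t.map .terminal) w n) :
    w = t.map .terminal ∧ n = 0 := by
  obtain _ | ⟨p, _⟩ := h
  · exact ⟨rfl, rfl⟩
  · obtain ⟨r, -, hr⟩ := p.exists_nonterminal_input_mem
    simp at hr

lemma nonterminal_succ {A : g.NT} (h : g.DerivesIn [.nonterminal A] w (n + 1)) :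
    ∃ r ∈ g.rules, r.input = A ∧ g.DerivesIn r.output w n := by
  obtain _ | ⟨⟨r, hr, hrw⟩, h⟩ := h
  obtain ⟨hA, rfl⟩ := hrw.eq_output_of_singleton
  exact ⟨r, hr, hA, h⟩

end DerivesIn

lemma derives_iff_exists_derivesIn {u v : List (Symbol T g.NT)} :
    g.Derives u v ↔ ∃ n, g.DerivesIn u v n := by
  refine ⟨fun h => ?_, fun ⟨_, h⟩ => h.derives⟩
  induction h using Relation.ReflTransGen.head_induction_on with
  | refl => exact ⟨0, .refl _⟩
  | head p _ ih => exact ⟨_, .head p ih.choose_spec⟩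

def Surrounds (g : ContextFreeGrammar T) (γ : List (Symbol T g.NT)) (B : g.NT)
    (pre post : List T) (c : ℕ) : Prop :=
  ∀ β m, g.DerivesIn [.nonterminal B] β m →
    g.DerivesIn γ (pre.map .terminal ++ β ++ post.map .terminal) (c + m)

namespace Surrounds

variable {γ γ' : List (Symbol T g.NT)} {A B : g.NT} {pre post t : List T} {c n : ℕ}

lemma refl (B : g.NT) : g.Surrounds [.nonterminal B] B [] [] 0 := fun β m h => by simpa using h

lemma append_right (h : g.Surrounds γ B pre post c) (h' : g.DerivesIn γ' (t.map .terminal) n) :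
    g.Surrounds (γ ++ γ') B pre (post ++ t) (c + n) := fun β m hβ => by
  simpa [Nat.add_right_comm] using (h β m hβ).append h'

lemma append_left (h' : g.DerivesIn γ' (t.map .terminal) n) (h : g.Surrounds γ B pre post c) :
    g.Surrounds (γ' ++ γ) B (t ++ pre) post (n + c) := fun β m hβ => by
  simpa [Nat.add_assoc] using h'.append (h β m hβ)

lemma head {r : ContextFreeRule T g.NT} (hr : r ∈ g.rules) (h : g.Surrounds r.output B pre post c) :
    g.Surrounds [.nonterminal r.input] B pre post (c + 1) := fun β m hβ => by
  simpa [Nat.add_right_comm] using DerivesIn.head ⟨r, hr, .input_output⟩ (h β m hβ)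

lemma trans {pre' post' : List T} {c' : ℕ} (h : g.Surrounds γ A pre post c)
    (h' : g.Surrounds [.nonterminal A] B pre' post' c') :
    g.Surrounds γ B (pre ++ pre') (post' ++ post) (c + c') := fun β m hβ => by
  simpa [Nat.add_assoc] using h _ _ (h' β m hβ)

lemma pump {v x w : List T} {m : ℕ} (h : g.Surrounds [.nonterminal A] A v x c)
    (hw : g.DerivesIn [.nonterminal A] (w.map .terminal) m) (n : ℕ) :
    g.DerivesIn [.nonterminal A]
      (((List.replicate n v).flatten ++ w ++ (List.replicate n x).flatten).map .terminal)
      (n * c + m) := by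
  induction n with
  | zero => simpa using hw
  | succ n ih =>
    rw [List.replicate_succ, List.replicate_succ', List.flatten_cons, List.flatten_append]
    simpa [Nat.succ_mul, Nat.add_assoc, Nat.add_comm c] using h _ _ ih

end Surrounds

structure TerminalDerivation (g : ContextFreeGrammar T) where
  root : g.NT
  word : List T
  steps : ℕ
  derivesIn : g.DerivesIn [.nonterminal root] (word.map .terminal) steps

-- each symbol of `γ` derives its own factor of `t`, so one of them derives a factor longer than `K`
lemma DerivesIn.exists_long_factor {γ : List (Symbol T g.NT)} {t : List T} {n K : ℕ}
    (hK : 1 ≤ K) (h : g.DerivesIn γ (t.map .terminal) n) (ht : γ.length * K < t.length) :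
    ∃ (e : g.TerminalDerivation) (pre post : List T) (c : ℕ), t = pre ++ e.word ++ post ∧
      K < e.word.length ∧ g.Surrounds γ e.root pre post c ∧ n = c + e.steps := by
  induction γ generalizing t n with
  | nil =>
    obtain ⟨ht', -⟩ := (show g.DerivesIn (([] : List T).map .terminal) _ n from h).of_map_terminal
    simp_all
  | cons s γ ih =>
    obtain ⟨w₁, w₂, n₁, n₂, hw, rfl, h₁, h₂⟩ :=
      (show g.DerivesIn ([s] ++ γ) _ _ from h).append_split
    obtain ⟨t₁, t₂, rfl, rfl, rfl⟩ := List.map_eq_append_iff.mp hw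
    by_cases hlong : K < t₁.length
    · cases s with
      | terminal a =>
        obtain ⟨ha, -⟩ := (show g.DerivesIn ([a].map .terminal) _ _ from h₁).of_map_terminal
        have : t₁.length = 1 := by simpa using congrArg List.length ha
        omega
      | nonterminal B =>
        refine ⟨⟨B, t₁, n₁, h₁⟩, [], t₂, 0 + n₂, by simp, hlong, ?_, by dsimp only; omega⟩
        exact (Surrounds.refl B).append_right h₂
    · have ht₂ : γ.length * K < t₂.length := by
        simp only [List.length_cons, List.length_append, Nat.succ_mul] at ht
        omega
      obtain ⟨e, pre, post, c, rfl, he, hS, rfl⟩ := ih h₂ ht₂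
      exact ⟨e, t₁ ++ pre, post, n₁ + c, by simp, he, hS.append_left h₁, by omega⟩

namespace TerminalDerivation

variable {K : ℕ}

def Contains (d e : g.TerminalDerivation) (pre post : List T) (c : ℕ) : Prop :=
  d.word = pre ++ e.word ++ post ∧ d.steps = c + e.steps ∧
    g.Surrounds [.nonterminal d.root] e.root pre post c

def ProperlyContains (d e : g.TerminalDerivation) : Prop :=
  ∃ pre post c, 0 < c ∧ d.Contains e pre post c

lemma Contains.refl (d : g.TerminalDerivation) : d.Contains d [] [] 0 :=
  ⟨by simp, by simp, Surrounds.refl d.root⟩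

lemma Contains.trans {d e f : g.TerminalDerivation} {pre post pre' post' : List T} {c c' : ℕ}
    (h : d.Contains e pre post c) (h' : e.Contains f pre' post' c') :
    d.Contains f (pre ++ pre') (post' ++ post) (c + c') :=
  ⟨by simp [h.1, h'.1], by rw [h.2.1, h'.2.1, Nat.add_assoc], h.2.2.trans h'.2.2⟩

instance : Trans (ProperlyContains (g := g)) ProperlyContains ProperlyContains where
  trans := fun ⟨_, _, _, hc, h⟩ ⟨_, _, _, _, h'⟩ => ⟨_, _, _, Nat.add_pos_left hc _, h.trans h'⟩

lemma exists_first_rule (d : g.TerminalDerivation) :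
    ∃ r ∈ g.rules, ∃ n, r.input = d.root ∧ d.steps = n + 1 ∧
      g.DerivesIn r.output (d.word.map .terminal) n := by
  obtain ⟨A, t, _ | n, h⟩ := d
  · have := h.eq_of_zero
    cases t <;> simp at this
  · obtain ⟨r, hr, hA, h⟩ := h.nonterminal_succ
    exact ⟨r, hr, n, hA, rfl, h⟩

lemma exists_properlyContains (hK : ∀ r ∈ g.rules, r.output.length ≤ K) (hK₁ : 1 ≤ K)
    {j : ℕ} {d : g.TerminalDerivation} (hd : K ^ (j + 1) < d.word.length) :
    ∃ e, d.ProperlyContains e ∧ K ^ j < e.word.length := by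
  obtain ⟨r, hr, n, hA, hsteps, h⟩ := d.exists_first_rule
  have hlen : r.output.length * K ^ j < d.word.length :=
    lt_of_le_of_lt (by rw [pow_succ']; exact Nat.mul_le_mul_right _ (hK r hr)) hd
  obtain ⟨e, pre, post, c, hw, he, hS, rfl⟩ := h.exists_long_factor (Nat.one_le_pow _ _ hK₁) hlen
  exact ⟨e, ⟨pre, post, c + 1, by omega, hw, by omega, hA ▸ hS.head hr⟩, he⟩

lemma exists_isChain (hK : ∀ r ∈ g.rules, r.output.length ≤ K) (hK₁ : 1 ≤ K) (j : ℕ)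
    {d : g.TerminalDerivation} (hd : K ^ j < d.word.length) :
    ∃ l : List g.TerminalDerivation, l.length = j ∧ (d :: l).IsChain ProperlyContains := by
  induction j generalizing d with
  | zero => exact ⟨[], rfl, .singleton d⟩
  | succ j ih =>
    obtain ⟨e, hde, he⟩ := exists_properlyContains hK hK₁ hd
    obtain ⟨l, rfl, hl⟩ := ih he
    exact ⟨e :: l, rfl, .cons_cons hde hl⟩

lemma exists_repeated_root (hK : ∀ r ∈ g.rules, r.output.length ≤ K) (hK₁ : 1 ≤ K)
    (S : Finset g.NT) (hS : ∀ r ∈ g.rules, r.input ∈ S) {d : g.TerminalDerivation}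
    (hd : K ^ S.card < d.word.length) :
    ∃ e e' pre post c, d.Contains e pre post c ∧ e.ProperlyContains e' ∧ e.root = e'.root := by
  classical
  obtain ⟨l, hl, hchain⟩ := exists_isChain hK hK₁ S.card hd
  have hdup : ¬((d :: l).map root).Nodup := fun hnd => by
    have hsub : ((d :: l).map root).toFinset ⊆ S := fun A hA => by
      obtain ⟨e, -, rfl⟩ := List.mem_map.mp (List.mem_toFinset.mp hA)
      obtain ⟨r, hr, -, hA, -⟩ := e.exists_first_rule
      exact hA ▸ hS r hr
    have := Finset.card_le_card hsub
    rw [List.toFinset_card_of_nodup hnd] at this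
    simp [hl] at this
  obtain ⟨A, hA⟩ := not_forall_not.mp (mt List.nodup_iff_sublist.mpr hdup)
  obtain ⟨_ | ⟨e, _ | ⟨e', _ | _⟩⟩, hsub, hroot⟩ := List.sublist_map_iff.mp hA <;>
    simp only [List.map_cons, List.map_nil, List.cons.injEq, reduceCtorEq, and_false,
      List.nil_eq] at hroot
  have hpw := hchain.pairwise
  have hee' : e.ProperlyContains e' := List.pairwise_pair.mp (hpw.sublist hsub)
  obtain rfl | he := List.mem_cons.mp (hsub.subset (List.mem_cons_self ..))
  · exact ⟨e, e', [], [], 0, .refl e, hee', hroot.1.symm.trans hroot.2.1⟩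
  · obtain ⟨pre, post, c, -, hde⟩ := List.rel_of_pairwise_cons hpw he
    exact ⟨e, e', pre, post, c, hde, hee', hroot.1.symm.trans hroot.2.1⟩

end TerminalDerivation

theorem pumping_lemma (g : ContextFreeGrammar T) :
    ∃ p, ∀ z ∈ g.language, p ≤ z.length → ∃ u v m x y : List T,
      z = u ++ v ++ m ++ x ++ y ∧ v ++ x ≠ [] ∧
      ∀ n, u ++ (List.replicate n v).flatten ++ m ++ (List.replicate n x).flatten ++ y ∈
        g.language := by
  classical
  set K := g.rules.sup (·.output.length) + 1
  have hK (r) (hr : r ∈ g.rules) : r.output.length ≤ K :=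
    (Finset.le_sup (f := (·.output.length)) hr).trans (Nat.le_succ _)
  set S := g.rules.image (·.input)
  refine ⟨K ^ S.card + 1, fun z hz hlen => ?_⟩
  have hex : ∃ n, g.DerivesIn [.nonterminal g.initial] (z.map .terminal) n :=
    derives_iff_exists_derivesIn.mp ((mem_language_iff g z).mp hz)
  obtain ⟨e, e', u, y, c₀, ⟨hz, hsteps, hde⟩, ⟨v, x, c, hc, he, hsteps', hee'⟩, hroot⟩ :=
    TerminalDerivation.exists_repeated_root hK (Nat.le_add_left 1 _) S
      (fun r hr => Finset.mem_image_of_mem _ hr) (d := ⟨_, z, _, Nat.find_spec hex⟩) hlen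
  dsimp only at hz hsteps hde
  rw [← hroot] at hee'
  refine ⟨u, v, e'.word, x, y, by simp [hz, he], fun hvx => ?_, fun n => ?_⟩
  · -- with `v = x = []`, cutting out the loop would give a shorter derivation of `z`
    obtain ⟨rfl, rfl⟩ := List.append_eq_nil_iff.mp hvx
    have hshort := hde _ _ (hroot ▸ e'.derivesIn)
    rw [← List.map_append, ← List.map_append, ← List.append_nil e'.word, ← List.nil_append e'.word,
      ← he, ← hz] at hshort
    have := Nat.find_min' hex hshort
    omega
  · have := hde _ _ (hee'.pump (hroot ▸ e'.derivesIn) n)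
    rw [mem_language_iff]
    simpa [List.append_assoc] using this.derives

end ContextFreeGrammar

namespace List

variable {α : Type*} (u v m x y : List α) (n : ℕ)

lemma length_pumped :
    (u ++ (replicate n v).flatten ++ m ++ (replicate n x).flatten ++ y).length =
      (u ++ m ++ y).length + n * (v ++ x).length := by
  simp only [length_append, length_flatten, map_replicate, sum_replicate, smul_eq_mul]
  ring

lemma count_pumped [BEq α] (a : α) :
    (u ++ (replicate n v).flatten ++ m ++ (replicate n x).flatten ++ y).count a =
      (u ++ m ++ y).count a + n * (v ++ x).count a := by
  simp only [count_append, count_flatten, map_replicate, sum_replicate, smul_eq_mul]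
  ring

lemma pumped_subset :
    u ++ (replicate n v).flatten ++ m ++ (replicate n x).flatten ++ y ⊆ u ++ v ++ m ++ x ++ y := by
  intro a
  simp only [mem_append, mem_flatten, mem_replicate]
  rintro ((((h | ⟨_, ⟨-, rfl⟩, h⟩) | h) | ⟨_, ⟨-, rfl⟩, h⟩) | h) <;> simp [h]

end List

lemma Finset.sum_range_card_le_sum (s : Finset ℕ) : ∑ i ∈ range s.card, i ≤ ∑ i ∈ s, i := by
  induction s using Finset.induction_on_max with
  | empty => simp
  | insert a s ha ih =>
    have has : a ∉ s := fun h => lt_irrefl a (ha a h)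
    have hcard : s.card ≤ a := by
      simpa using Finset.card_le_card (fun b hb => Finset.mem_range.mpr (ha b hb) : s ⊆ range a)
    rw [card_insert_of_notMem has, sum_range_succ, sum_insert has]
    omega

lemma List.Nodup.length_mul_length_sub_one_le {l : List ℕ} (h : l.Nodup) :
    l.length * (l.length - 1) ≤ 2 * l.sum := by
  have := (toFinset l).sum_range_card_le_sum
  rw [toFinset_card_of_nodup h, sum_toFinset _ h, map_id'] at this
  rw [← Finset.sum_range_id_mul_two]
  omega

namespace Fm

def allBot : List ℕ → Fm
  | [] => .bot
  | x :: l => .all x (allBot l)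

lemma length_str_allBot (l : List ℕ) : (allBot l).str.length = l.sum + 4 * l.length + 1 := by
  induction l with
  | nil => rfl
  | cons x l ih =>
    simp only [allBot, str, varStr, List.length_append, List.length_cons, List.length_nil,
      List.length_replicate, ih, List.sum_cons]
    omega

lemma count_w_str_allBot (l : List ℕ) : (allBot l).str.count .w = l.length := by
  induction l with
  | nil => rfl
  | cons x l ih => simp [allBot, str, varStr, List.count_replicate, ih]

lemma notMem_str_allBot (l : List ℕ) :
    Alph.imp ∉ (allBot l).str ∧ Alph.deq ∉ (allBot l).str ∧ Alph.mem ∉ (allBot l).str := by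
  induction l with
  | nil => simp [allBot, str]
  | cons x l ih => simp_all [allBot, str, varStr, List.mem_replicate]

lemma eq_allBot_of_str_subset {l : List ℕ} {φ : Fm} (h : φ.str ⊆ (allBot l).str) :
    ∃ l', φ = allBot l' := by
  obtain ⟨himp, hdeq, hmem⟩ := notMem_str_allBot l
  induction φ with
  | bot => exact ⟨[], rfl⟩
  | eq => exact absurd (h (by simp [str])) hdeq
  | mem => exact absurd (h (by simp [str])) hmem
  | imp => exact absurd (h (by simp [str])) himp
  | all x φ ih =>
    obtain ⟨l', rfl⟩ := ih fun a ha => h (by simp [str, ha])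
    exact ⟨x :: l', rfl⟩

lemma quantCount_allBot (x : ℕ) (l : List ℕ) : (allBot l).quantCount x = l.count x := by
  induction l with
  | nil => rfl
  | cons y l ih =>
    simp only [allBot, quantCount, ih, List.count_cons, beq_iff_eq]
    omega

lemma not_freeIn_allBot (x : ℕ) (l : List ℕ) : ¬(allBot l).FreeIn x := by
  induction l with
  | nil => exact id
  | cons y l ih => exact fun h => ih h.2

lemma vars_allBot (l : List ℕ) : (allBot l).vars = l.toFinset := by
  induction l with
  | nil => rfl
  | cons y l ih => simp [allBot, vars, ih]

lemma atoms_allBot (l : List ℕ) : (allBot l).atoms = ∅ := by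
  induction l with
  | nil => rfl
  | cons y l ih => exact ih

lemma acyclic_allBot_iff {l : List ℕ} : (allBot l).Acyclic ↔ l.Nodup := by
  simp only [Acyclic, vars_allBot, quantCount_allBot, atoms_allBot, Finset.notMem_empty,
    false_and, not_false_eq_true, and_true, not_freeIn_allBot,
    List.mem_toFinset, List.nodup_iff_count_le_one]
  refine ⟨fun ⟨h, _⟩ a => ?_, fun h => ⟨fun x _ => by have := h x; omega,
    fun ⟨_, _, _, hn, _, _, hα⟩ => hα ⟨0, hn⟩⟩⟩
  by_cases ha : a ∈ l
  · rcases h a ha with h | h <;> omega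
  · simp [List.count_eq_zero_of_not_mem ha]

lemma allBot_range_not_pumpable {k : ℕ} {u v m x y : List Alph}
    (hz : (allBot (List.range k)).str = u ++ v ++ m ++ x ++ y) (hvx : v ++ x ≠ []) :
    ¬∀ n, ∃ l : List ℕ, l.Nodup ∧
      (allBot l).str =
        u ++ (List.replicate n v).flatten ++ m ++ (List.replicate n x).flatten ++ y := by
  intro h
  set a := (u ++ m ++ y).count .w
  set b := (v ++ x).count .w
  set p := (u ++ m ++ y).length
  set d := (v ++ x).length
  have hd : 0 < d := List.length_pos_iff.mpr hvx
  -- the `n`-th pumped formula has `L` distinct variables carrying `S` primes in total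
  have hpumped (n : ℕ) :
      ∃ L S, L * (L - 1) ≤ 2 * S ∧ L = a + n * b ∧ S + 4 * L + 1 = p + n * d := by
    obtain ⟨l, hl, hs⟩ := h n
    refine ⟨l.length, l.sum, hl.length_mul_length_sub_one_le, ?_, ?_⟩
    · rw [← count_w_str_allBot, hs, List.count_pumped]
    · rw [← length_str_allBot, hs, List.length_pumped]
  have hz₁ : (allBot (List.range k)).str =
      u ++ (List.replicate 1 v).flatten ++ m ++ (List.replicate 1 x).flatten ++ y := by
    simpa using hz
  have hk : a + 1 * b = k := by
    rw [← List.count_pumped, ← hz₁, count_w_str_allBot, List.length_range]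
  have hlen : p + 1 * d = (List.range k).sum + 4 * k + 1 := by
    rw [← List.length_pumped, ← hz₁, length_str_allBot, List.length_range]
  have htri : 2 * (List.range k).sum = k * (k - 1) := by
    rw [← Finset.sum_range_id_mul_two, ← List.toFinset_range, List.sum_toFinset _ List.nodup_range,
      List.map_id', mul_comm]
  rcases Nat.eq_zero_or_pos b with hb | hb
  · -- `v` and `x` contain no `w`: unpumping keeps the `k` variables but removes primes
    obtain ⟨L, S, hLS, hL, hS⟩ := hpumped 0
    obtain rfl : L = k := by omega
    omega
  · -- pumping makes the number of variables grow linearly, so the primes must grow quadratically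
    obtain ⟨L, S, hLS, hL, hS⟩ := hpumped (2 * p + 2 * d + 2)
    have hnL : 2 * p + 2 * d + 2 ≤ L := by nlinarith
    have := Nat.mul_le_mul hnL (Nat.sub_le_sub_right hnL 1)
    rw [show 2 * p + 2 * d + 2 - 1 = 2 * p + 2 * d + 1 by omega] at this
    nlinarith

end Fm

/-- The language of acyclic formulae of set theory is not context-free. -/
theorem acyclic_not_contextFree :
    ¬ Language.IsContextFree {s : List Alph | ∃ φ : Fm, φ.Acyclic ∧ φ.str = s} := by
  rintro ⟨g, hg⟩
  have hmem (s : List Alph) : s ∈ g.language ↔ ∃ φ : Fm, φ.Acyclic ∧ φ.str = s := by rw [hg]; rfl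
  obtain ⟨p, hp⟩ := g.pumping_lemma
  have hz : (Fm.allBot (List.range p)).str ∈ g.language :=
    (hmem _).mpr ⟨_, Fm.acyclic_allBot_iff.mpr List.nodup_range, rfl⟩
  obtain ⟨u, v, m, x, y, hz', hvx, hpump⟩ := hp _ hz (by rw [Fm.length_str_allBot, List.length_range]; omega)
  refine Fm.allBot_range_not_pumpable hz' hvx fun n => ?_
  obtain ⟨φ, hφ, hstr⟩ := (hmem _).mp (hpump n)
  obtain ⟨l, rfl⟩ := Fm.eq_allBot_of_str_subset (hstr ▸ hz' ▸ List.pumped_subset u v m x y n)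
  exact ⟨l, Fm.acyclic_allBot_iff.mp hφ, hstr⟩
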